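/- arXiv:0812.1724 — 5 statements merged into one kernel-verified Lean document; each statement's English description precedes it below -/
import Mathlib

section
/- Let n be a positive even integer, let a_1, ..., a_n be integers satisfying a_1 + ... + a_n ≡ 0 (mod n), and let w_1, ..., w_n be integers forming an arithmetic progression whose common difference is even (i.e., w_k = c + (k-1)·d for some integers c and d with d even). Then there exists a permutation σ of {1, ..., n} such that ∑_{k=1}^n w_k·a_{σ(k)} ≡ 0 (mod n). -/
/-!
Write `n = 2m` and `d = 2e`. Then `∑ w_k a_{σ k} = c ∑ a_k + 2e ∑ k a_{σ k}`, so it suffices to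
arrange the `a_i` so that `∑ k a_{σ k} ≡ 0 (mod m)`; among the weights `k < 2m` every residue
mod `m` occurs exactly twice.

Sort the `a_i` by their residues mod `m`. Going once around the sorted cycle, the gaps between
consecutive residues (taken mod `m`) add up to at most `m`, so one of the two ways of cutting the
cycle into consecutive pairs `(x_j, y_j)` has total gap `D = ∑ δ_j ≤ m / 2`, where
`δ_j = (y_j - x_j) mod m`. Giving `y_j` the weight `u_j` and `x_j` the weight `-u_j`, we need
distinct `u_j ∈ ℤ/m` with `∑ u_j δ_j = 0`. Take `u_j = 2 P_j + δ_j - D` with `P_j = ∑_{i<j} δ_i`: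
then `∑ (2 P_j + δ_j) δ_j = D²`, and on the support of `δ` the numbers `2 P_j + δ_j` are strictly
increasing and lie in `[0, 2D) ⊆ [0, m)`, hence distinct mod `m`.
-/

open Finset

theorem sq_sum_eq_sum_prefix_mul {α R : Type*} [LinearOrder α] [CommSemiring R]
    (s : Finset α) (f : α → R) :
    (∑ i ∈ s, f i) ^ 2 = ∑ j ∈ s, (2 * ∑ i ∈ s with i < j, f i + f j) * f j := by
  induction s using Finset.induction_on_max with
  | empty => simp
  | insert a s ha ih =>
    have ha' : a ∉ s := fun h => lt_irrefl a (ha a h)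
    have hmax : ({i ∈ insert a s | i < a} : Finset α) = s := by
      rw [filter_insert, if_neg (lt_irrefl a), filter_true_of_mem ha]
    have hlt : ∑ j ∈ s, (2 * ∑ i ∈ insert a s with i < j, f i + f j) * f j =
        ∑ j ∈ s, (2 * ∑ i ∈ s with i < j, f i + f j) * f j :=
      sum_congr rfl fun j hj => by rw [filter_insert, if_neg (not_lt.2 (ha j hj).le)]
    rw [sum_insert ha', sum_insert ha', hmax, hlt, ← ih]
    ring

theorem injOn_natCast_two_mul_sum_lt_add {ι : Type*} [LinearOrder ι] [Fintype ι] {m : ℕ}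
    (δ : ι → ℕ) (h : 2 * ∑ j, δ j ≤ m) :
    Set.InjOn (fun j => ((2 * ∑ k with k < j, δ k + δ j : ℕ) : ZMod m)) {j | δ j ≠ 0} := by
  set P : ι → ℕ := fun j => ∑ k with k < j, δ k
  have hP_add_le : ∀ j (t : Finset ι), insert j (univ.filter (· < j)) ⊆ t →
      P j + δ j ≤ ∑ i ∈ t, δ i := by
    intro j t ht
    rw [add_comm, ← sum_insert (by simp)]
    exact sum_le_sum_of_subset ht
  have hlt : ∀ j, δ j ≠ 0 → 2 * P j + δ j < m := fun j hj => by
    have := hP_add_le j univ (subset_univ _)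
    omega
  have hmono : ∀ i j, i < j → δ i ≠ 0 → 2 * P i + δ i < 2 * P j + δ j := fun i j hij hi => by
    have : P i + δ i ≤ P j := hP_add_le i (univ.filter (· < j)) fun k => by
      simp only [mem_insert, mem_filter, mem_univ, true_and]
      rintro (rfl | hk)
      exacts [hij, hk.trans hij]
    omega
  intro i hi j hj hij
  have hval : 2 * P i + δ i = 2 * P j + δ j := by
    have := congrArg ZMod.val hij
    rwa [ZMod.val_cast_of_lt (hlt i hi), ZMod.val_cast_of_lt (hlt j hj)] at this
  rcases lt_trichotomy i j with hij | rfl | hji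
  · exact absurd hval (hmono i j hij hi).ne
  · rfl
  · exact absurd hval (hmono j i hji hj).ne'

theorem exists_equiv_sum_mul_eq_zero {m : ℕ} [NeZero m] (δ : Fin m → ℕ)
    (h : 2 * ∑ j, δ j ≤ m) : ∃ u : Fin m ≃ ZMod m, ∑ j, u j * δ j = 0 := by
  set q : Fin m → ℕ := fun j => 2 * ∑ k with k < j, δ k + δ j with hq
  set v : Fin m → ZMod m := fun j => (q j : ZMod m) - (∑ i, δ i : ℕ) with hv
  have hv_injOn : Set.InjOn v {j | δ j ≠ 0} := fun i hi j hj hij =>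
    injOn_natCast_two_mul_sum_lt_add δ h hi hj (sub_left_inj.1 hij)
  obtain ⟨u, hu⟩ := Cardinal.extend_function_finite ⟨_, hv_injOn.injective⟩
    ⟨(ZMod.finEquiv m).toEquiv⟩
  have hsq : ((∑ j, q j * δ j : ℕ) : ZMod m) = ((∑ j, δ j : ℕ) : ZMod m) ^ 2 := by
    rw [hq, ← sq_sum_eq_sum_prefix_mul, Nat.cast_pow]
  refine ⟨u, ?_⟩
  calc ∑ j, u j * δ j = ∑ j, v j * δ j := sum_congr rfl fun j _ => by
          by_cases hj : δ j = 0
          · simp [hj]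
          · rw [hu ⟨j, hj⟩]; rfl
    _ = ((∑ j, q j * δ j : ℕ) : ZMod m) - (∑ i, δ i : ℕ) * (∑ j, δ j : ℕ) := by
          simp only [hv, sub_mul, sum_sub_distrib, Nat.cast_sum, Nat.cast_mul, mul_sum]
    _ = 0 := by rw [hsq, sq, sub_self]

theorem ZMod.val_sub_le_add {m : ℕ} [NeZero m] (a b : ZMod m) :
    ((a - b).val : ℤ) ≤ a.val - b.val + m := by
  have h := ZMod.val_add (a - b) b
  rw [sub_add_cancel] at h
  have := ZMod.val_lt (a - b)
  have := ZMod.val_lt b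
  have := Nat.div_add_mod ((a - b).val + b.val) m
  have : ((a - b).val + b.val) / m < 2 := (Nat.div_lt_iff_lt_mul (NeZero.pos m)).2 (by omega)
  interval_cases hq : ((a - b).val + b.val) / m <;> omega

theorem sum_val_sub_finRotate_le {N m : ℕ} [NeZero N] [NeZero m] (b : Fin N → ZMod m)
    (hb : Monotone fun i => (b i).val) :
    ∑ i, (b (finRotate N i) - b i).val ≤ m := by
  have hgap : ∀ i, ((b (finRotate N i) - b i).val : ℤ) ≤
      ((b (finRotate N i)).val - (b i).val) + if i = -1 then (m : ℤ) else 0 := by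
    intro i
    split_ifs with hi
    · exact ZMod.val_sub_le_add _ _
    · have hle := hb ((lt_finRotate_iff_ne_neg_one i).2 hi).le
      rw [ZMod.val_sub hle, Nat.cast_sub hle, add_zero]
  zify
  calc ∑ i, ((b (finRotate N i) - b i).val : ℤ)
      ≤ ∑ i, (((b (finRotate N i)).val - (b i).val : ℤ) + if i = -1 then (m : ℤ) else 0) :=
        sum_le_sum fun i _ => hgap i
    _ = m := by
        rw [sum_add_distrib, sum_sub_distrib,
          Equiv.sum_comp (finRotate N) (fun i => ((b i).val : ℤ)), sub_self,
          sum_ite_eq' univ (-1 : Fin N), if_pos (mem_univ _), zero_add]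

theorem finRotate_finProdFinEquiv_zero {m : ℕ} (j : Fin m) :
    finRotate (m * 2) (finProdFinEquiv (j, 0)) = finProdFinEquiv (j, 1) := by
  have : NeZero (m * 2) := ⟨by have := j.pos; omega⟩
  ext
  simp only [finRotate_apply, Fin.val_add, finProdFinEquiv_apply_val, Fin.val_one', Fin.val_zero]
  rw [Nat.one_mod_eq_one.2 (by omega), Nat.mod_eq_of_lt (by omega)]
  omega

theorem exists_equiv_fin_mul_natCast_eq (m k : ℕ) [NeZero m] :
    ∃ E : Fin k × ZMod m ≃ Fin (m * k), ∀ e r, ((E (e, r) : ℕ) : ZMod m) = r := by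
  let F : Fin (m * k) → Fin k × ZMod m := fun i =>
    (⟨i / m, Nat.div_lt_of_lt_mul i.isLt⟩, ((i : ℕ) : ZMod m))
  have hF : F.Injective := by
    intro i j hij
    simp only [F, Prod.mk.injEq, Fin.mk.injEq] at hij
    have hmod := congrArg ZMod.val hij.2
    rw [ZMod.val_natCast, ZMod.val_natCast] at hmod
    exact Fin.ext (by rw [← Nat.div_add_mod i m, ← Nat.div_add_mod j m, hij.1, hmod])
  have hbij : F.Bijective := (Fintype.bijective_iff_injective_and_card F).2
    ⟨hF, by simp [ZMod.card, mul_comm]⟩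
  exact ⟨(Equiv.ofBijective F hbij).symm, fun e r =>
    congrArg Prod.snd ((Equiv.ofBijective F hbij).apply_symm_apply (e, r))⟩

/-- `finProdFinEquiv (j, e) = 2 j + e`, so this pairs the entries `2 j` and `2 j + 1`. -/
def pairGapSum {m : ℕ} (b : Fin (m * 2) → ZMod m) : ℕ :=
  ∑ j : Fin m, (b (finProdFinEquiv (j, 1)) - b (finProdFinEquiv (j, 0))).val

theorem pairGapSum_add_pairGapSum_comp_finRotate {m : ℕ} (b : Fin (m * 2) → ZMod m) :
    pairGapSum b + pairGapSum (b ∘ finRotate _) = ∑ i, (b (finRotate _ i) - b i).val := by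
  rw [← finProdFinEquiv.sum_comp, Fintype.sum_prod_type]
  simp only [pairGapSum, Fin.sum_univ_two, sum_add_distrib, Function.comp_apply,
    finRotate_finProdFinEquiv_zero]

theorem exists_perm_sum_natCast_mul_eq_zero_of_pairGapSum {m : ℕ} [NeZero m]
    (b : Fin (m * 2) → ZMod m) (h : 2 * pairGapSum b ≤ m) :
    ∃ σ : Equiv.Perm (Fin (m * 2)), ∑ k : Fin (m * 2), ((k : ℕ) : ZMod m) * b (σ k) = 0 := by
  obtain ⟨u, hu⟩ := exists_equiv_sum_mul_eq_zero _ h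
  obtain ⟨E, hE⟩ := exists_equiv_fin_mul_natCast_eq m 2
  -- `(j, 0) ↦ (0, -u j)` and `(j, 1) ↦ (1, u j)`; then `E` makes the second coordinate the weight
  let π : Equiv.Perm (Fin (m * 2)) := finProdFinEquiv.symm.trans <| (Equiv.prodComm _ _).trans <|
    (Equiv.prodShear (Equiv.refl _) fun e => if e = 0 then u.trans (Equiv.neg _) else u).trans E
  refine ⟨π.symm, ?_⟩
  rw [← Equiv.sum_comp π]
  simp only [Equiv.symm_apply_apply]
  rw [← finProdFinEquiv.sum_comp, Fintype.sum_prod_type]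
  simp only [ZMod.natCast_zmod_val] at hu
  simp only [π, Equiv.trans_apply, Equiv.symm_apply_apply, Equiv.prodComm_apply,
    Prod.swap_prod_mk, Equiv.prodShear_apply, Equiv.refl_apply, hE, Fin.sum_univ_two, if_pos,
    if_neg one_ne_zero, Equiv.neg_apply, neg_mul]
  rw [← hu]
  exact sum_congr rfl fun j _ => by ring

theorem exists_perm_sum_natCast_mul_eq_zero {m : ℕ} [NeZero m] (b : Fin (m * 2) → ZMod m) :
    ∃ σ : Equiv.Perm (Fin (m * 2)), ∑ k : Fin (m * 2), ((k : ℕ) : ZMod m) * b (σ k) = 0 := by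
  have : NeZero (m * 2) := ⟨by have := NeZero.ne m; omega⟩
  set ρ := Tuple.sort fun i => (b i).val
  have hgap := sum_val_sub_finRotate_le (b ∘ ρ) (Tuple.monotone_sort fun i => (b i).val)
  rw [← pairGapSum_add_pairGapSum_comp_finRotate] at hgap
  by_cases h : 2 * pairGapSum (b ∘ ρ) ≤ m
  · obtain ⟨σ, hσ⟩ := exists_perm_sum_natCast_mul_eq_zero_of_pairGapSum _ h
    exact ⟨σ.trans ρ, hσ⟩
  · obtain ⟨σ, hσ⟩ := exists_perm_sum_natCast_mul_eq_zero_of_pairGapSum ((b ∘ ρ) ∘ finRotate _)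
      (by omega)
    exact ⟨(σ.trans (finRotate _)).trans ρ, hσ⟩

theorem exists_perm_dvd_sum_natCast_mul (m : ℕ) (a : Fin (m * 2) → ℤ) :
    ∃ σ : Equiv.Perm (Fin (m * 2)), (m : ℤ) ∣ ∑ k : Fin (m * 2), ((k : ℕ) : ℤ) * a (σ k) := by
  rcases eq_or_ne m 0 with rfl | hm
  · exact ⟨1, by simp⟩
  have : NeZero m := ⟨hm⟩
  obtain ⟨σ, hσ⟩ := exists_perm_sum_natCast_mul_eq_zero fun i => (a i : ZMod m)
  exact ⟨σ, (ZMod.intCast_zmod_eq_zero_iff_dvd _ m).1 (by push_cast; exact hσ)⟩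

theorem stmt_1_general (n : ℕ) (hne : Even n) (a w : Fin n → ℤ)
    (ha : (n : ℤ) ∣ ∑ k : Fin n, a k)
    (c d : ℤ) (hd : Even d) (hw : ∀ k : Fin n, w k = c + (k : ℤ) * d) :
    ∃ σ : Equiv.Perm (Fin n),
      (n : ℤ) ∣ ∑ k : Fin n, w k * a (σ k) := by
  obtain ⟨m, rfl⟩ : ∃ m, n = m * 2 := ⟨n / 2, by obtain ⟨r, hr⟩ := hne; omega⟩
  obtain ⟨σ, q, hq⟩ := exists_perm_dvd_sum_natCast_mul m a
  refine ⟨σ, ?_⟩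
  have hsplit : ∑ k, w k * a (σ k) =
      c * ∑ k, a k + d * ∑ k : Fin (m * 2), ((k : ℕ) : ℤ) * a (σ k) := by
    rw [← Equiv.sum_comp σ a, mul_sum, mul_sum, ← sum_add_distrib]
    exact sum_congr rfl fun k _ => by rw [hw]; ring
  obtain ⟨e, rfl⟩ := hd
  rw [hsplit, hq]
  exact dvd_add (dvd_mul_of_dvd_right ha c) ⟨e * q, by push_cast; ring⟩

/-- Let `n` be a positive even integer, let `a_1, ..., a_n` be integers with
`a_1 + ... + a_n ≡ 0 (mod n)`, and let `w_1, ..., w_n` be an arithmetic progression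
with even common difference, i.e. `w_k = c + (k-1)·d` with `d` even (here indexed
by `Fin n`, so `w k = c + k·d`).  Then some permutation `σ` of `{1, ..., n}` satisfies
`∑_{k=1}^n w_k·a_{σ(k)} ≡ 0 (mod n)`. -/
theorem stmt_1 (n : ℕ) (hn : 0 < n) (hne : Even n) (a w : Fin n → ℤ)
    (ha : (n : ℤ) ∣ ∑ k : Fin n, a k)
    (c d : ℤ) (hd : Even d) (hw : ∀ k : Fin n, w k = c + (k : ℤ) * d) :
    ∃ σ : Equiv.Perm (Fin n),
      (n : ℤ) ∣ ∑ k : Fin n, w k * a (σ k) :=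
  stmt_1_general n hne a w ha c d hd hw
end

section
/- Let n = m·q where m and q are positive integers with m ≥ 2, let d be a positive divisor of q, and let a_1, ..., a_n be integers. Then there exists a partition I_1, ..., I_m of {1, ..., n} such that for each s = 1, ..., m the set I_s has exactly q elements, and whenever d divides ∑_{i ∈ I_s} a_i, all the integers a_i with i ∈ I_s are pairwise congruent modulo d. -/
/-!
Work in an abelian group `G` with `q • g = 0` for all `g` (for the theorem, `G = ZMod d`); a block
is good if a zero sum over it forces `a` to be constant on it. Good blocks of size `q` can be
peeled off one at a time: take `q` elements of one fiber of `a` if some fiber is that large,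
otherwise any `q - 1` elements complete to a block with nonzero sum.

The last two blocks must be good simultaneously. If some fiber has `q` elements, a block inside it
has sum `q • c = 0`; should the total sum also vanish and the complement be non-constant, swapping
one element gives both halves nonzero sums. If every fiber is smaller than `q`, `a` takes three
distinct values, and removing one of three such elements from a `(q + 1)`-set containing them
yields a block whose sum avoids both `0` and the total sum.
-/

open Finset Function

lemma Finset.exists_subset_card_eq_forall {ι : Type*} {S : Finset ι} {p : ι → Prop}
    [DecidablePred p] {q : ℕ} (h : q ≤ #{i ∈ S | p i}) : ∃ B ⊆ S, #B = q ∧ ∀ i ∈ B, p i := by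
  obtain ⟨B, hB, hBq⟩ := exists_subset_card_eq h
  exact ⟨B, hB.trans (filter_subset _ _), hBq, fun i hi => (mem_filter.1 (hB hi)).2⟩

section

variable {ι G : Type*} [AddCommGroup G]

def IsGoodBlock (a : ι → G) (B : Finset ι) : Prop :=
  ∑ i ∈ B, a i = 0 → ∀ i ∈ B, ∀ j ∈ B, a i = a j

variable {a : ι → G} {q : ℕ} {B S : Finset ι}

lemma isGoodBlock_of_sum_ne_zero (h : ∑ i ∈ B, a i ≠ 0) : IsGoodBlock a B :=
  fun h0 => absurd h0 h

lemma isGoodBlock_of_forall_eq {c : G} (h : ∀ i ∈ B, a i = c) : IsGoodBlock a B :=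
  fun _ i hi j hj => (h i hi).trans (h j hj).symm

structure IsGoodPartition (a : ι → G) (q : ℕ) (S : Finset ι) {m : ℕ} (I : Fin m → Finset ι) :
    Prop where
  pairwise_disjoint : Pairwise (Disjoint on I)
  subset : ∀ s, I s ⊆ S
  exists_mem : ∀ k ∈ S, ∃ s, k ∈ I s
  card_eq : ∀ s, #(I s) = q
  isGoodBlock : ∀ s, IsGoodBlock a (I s)

lemma isGoodPartition_const (hS : #S = q) (hgood : IsGoodBlock a S) :
    IsGoodPartition a q S (fun _ : Fin 1 => S) :=
  ⟨Subsingleton.pairwise, fun _ => subset_rfl, fun _ hk => ⟨0, hk⟩, fun _ => hS, fun _ => hgood⟩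

variable [DecidableEq ι]

lemma isGoodBlock_sdiff_of_sum_ne (hBS : B ⊆ S) (h : ∑ i ∈ B, a i ≠ ∑ i ∈ S, a i) :
    IsGoodBlock a (S \ B) := by
  refine isGoodBlock_of_sum_ne_zero ?_
  rw [sum_sdiff_eq_sub hBS, sub_ne_zero]
  exact h.symm

lemma exists_isGoodBlock (hS : 2 * q ≤ #S + 1) : ∃ B ⊆ S, #B = q ∧ IsGoodBlock a B := by
  classical
  by_cases hfiber : ∃ c, q ≤ #{i ∈ S | a i = c}
  · obtain ⟨c, hc⟩ := hfiber
    obtain ⟨B, hBS, hBq, hBc⟩ := exists_subset_card_eq_forall hc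
    exact ⟨B, hBS, hBq, isGoodBlock_of_forall_eq hBc⟩
  push Not at hfiber
  have hq : 0 < q := (hfiber 0).pos
  obtain ⟨C, hCS, hCq⟩ := exists_subset_card_eq (s := S) (n := q - 1) (by omega)
  -- If every completion of `C` had zero sum, `S \ C` would lie in a single fiber of `a`.
  obtain ⟨e, he, hne⟩ : ∃ e ∈ S \ C, a e + ∑ i ∈ C, a i ≠ 0 := by
    by_contra! h
    have hsub : S \ C ⊆ {i ∈ S | a i = -∑ j ∈ C, a j} := fun e he =>
      mem_filter.2 ⟨(mem_sdiff.1 he).1, eq_neg_of_add_eq_zero_left (h e he)⟩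
    have := card_le_card hsub
    have := hfiber (-∑ j ∈ C, a j)
    rw [card_sdiff_of_subset hCS] at *
    omega
  have heC : e ∉ C := (mem_sdiff.1 he).2
  refine ⟨insert e C, insert_subset (mem_sdiff.1 he).1 hCS, ?_, isGoodBlock_of_sum_ne_zero ?_⟩
  · rw [card_insert_of_notMem heC]; omega
  · rwa [sum_insert heC]

lemma exists_split_of_le_card_fiber [DecidableEq G] {c : G} (hqc : q • c = 0)
    (hS : #S = 2 * q) (hc : q ≤ #{i ∈ S | a i = c}) :
    ∃ B ⊆ S, #B = q ∧ IsGoodBlock a B ∧ IsGoodBlock a (S \ B) := by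
  obtain ⟨B, hBS, hBq, hBc⟩ := exists_subset_card_eq_forall hc
  have hB0 : ∑ i ∈ B, a i = 0 := by rw [sum_congr rfl hBc, sum_const, hBq, hqc]
  obtain hT | hT := ne_or_eq (∑ i ∈ S, a i) 0
  · exact ⟨B, hBS, hBq, isGoodBlock_of_forall_eq hBc,
      isGoodBlock_sdiff_of_sum_ne hBS (hB0 ▸ hT.symm)⟩
  by_cases hconst : ∀ z ∈ S \ B, a z = c
  · exact ⟨B, hBS, hBq, isGoodBlock_of_forall_eq hBc, isGoodBlock_of_forall_eq hconst⟩
  push Not at hconst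
  obtain ⟨z, hz, hzc⟩ := hconst
  have hS0 : 0 < #S := card_pos.2 ⟨z, (mem_sdiff.1 hz).1⟩
  obtain ⟨b, hb⟩ : B.Nonempty := card_pos.1 (by omega)
  have hzB : z ∉ B.erase b := fun h => (mem_sdiff.1 hz).2 (mem_of_mem_erase h)
  have hB'S : insert z (B.erase b) ⊆ S :=
    insert_subset (mem_sdiff.1 hz).1 ((erase_subset _ _).trans hBS)
  have hsum : ∑ i ∈ insert z (B.erase b), a i ≠ 0 := by
    rw [sum_insert hzB, sum_erase_eq_sub hb, hB0, hBc b hb, zero_sub, ← sub_eq_add_neg]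
    exact sub_ne_zero.2 hzc
  refine ⟨insert z (B.erase b), hB'S, ?_, isGoodBlock_of_sum_ne_zero hsum,
    isGoodBlock_sdiff_of_sum_ne hB'S (hT ▸ hsum)⟩
  rw [card_insert_of_notMem hzB, card_erase_of_mem hb, hBq]
  omega

lemma exists_split_of_card_fiber_lt [DecidableEq G] (hS : #S = 2 * q)
    (hc : ∀ c, #{i ∈ S | a i = c} < q) :
    ∃ B ⊆ S, #B = q ∧ IsGoodBlock a B ∧ IsGoodBlock a (S \ B) := by
  have hq : 0 < q := (hc 0).pos
  obtain ⟨i₀, hi₀⟩ : S.Nonempty := card_pos.1 (by omega)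
  have hq2 : 1 < q :=
    lt_of_le_of_lt (card_pos.2 ⟨i₀, mem_filter.2 ⟨hi₀, rfl⟩⟩ : 0 < #{i ∈ S | a i = a i₀}) (hc _)
  have himage : 2 < #(S.image a) := by
    have := card_le_mul_card_image S (q - 1) fun c _ => Nat.le_pred_of_lt (hc c)
    by_contra! h
    have := Nat.mul_le_mul_left (q - 1) h
    omega
  obtain ⟨_, _, _, hu, hv, hw, huv, huw, hvw⟩ := two_lt_card_iff.1 himage
  obtain ⟨i, hi, rfl⟩ := mem_image.1 hu
  obtain ⟨j, hj, rfl⟩ := mem_image.1 hv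
  obtain ⟨l, hl, rfl⟩ := mem_image.1 hw
  obtain ⟨D, hijl, hDS, hDq⟩ := exists_subsuperset_card_eq (s := {i, j, l}) (t := S) (n := q + 1)
    (by simp [insert_subset_iff, hi, hj, hl]) (card_le_three.trans (by omega)) (by omega)
  -- Erasing `x` from `D` leaves the sum `∑ D - a x`; of three distinct values of `a`, one avoids
  -- both `∑ D` and `∑ D - ∑ S`.
  obtain ⟨x, hx, hx0, hxS⟩ :
      ∃ x ∈ D, a x ≠ ∑ k ∈ D, a k ∧ a x ≠ ∑ k ∈ D, a k - ∑ k ∈ S, a k := by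
    by_contra! h
    have hai := h i (hijl (by simp))
    have haj := h j (hijl (by simp))
    have hal := h l (hijl (by simp))
    grind
  have hsum : ∑ k ∈ D.erase x, a k = ∑ k ∈ D, a k - a x := sum_erase_eq_sub hx
  refine ⟨D.erase x, (erase_subset _ _).trans hDS, ?_, isGoodBlock_of_sum_ne_zero ?_,
    isGoodBlock_sdiff_of_sum_ne ((erase_subset _ _).trans hDS) ?_⟩
  · rw [card_erase_of_mem hx, hDq, Nat.add_sub_cancel]
  · rw [hsum, sub_ne_zero]
    exact hx0.symm
  · rw [hsum]
    contrapose! hxS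
    rw [← hxS, sub_sub_cancel]

lemma exists_split (hG : ∀ g : G, q • g = 0) (hS : #S = 2 * q) :
    ∃ B ⊆ S, #B = q ∧ IsGoodBlock a B ∧ IsGoodBlock a (S \ B) := by
  classical
  by_cases hfiber : ∃ c, q ≤ #{i ∈ S | a i = c}
  · obtain ⟨c, hc⟩ := hfiber
    exact exists_split_of_le_card_fiber (hG c) hS hc
  push Not at hfiber
  exact exists_split_of_card_fiber_lt hS hfiber

lemma IsGoodPartition.cons {m : ℕ} {I : Fin m → Finset ι} (hI : IsGoodPartition a q (S \ B) I)
    (hBS : B ⊆ S) (hBq : #B = q) (hB : IsGoodBlock a B) :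
    IsGoodPartition a q S (Fin.cons B I : Fin (m + 1) → Finset ι) := by
  have hdisj : ∀ s, Disjoint B (I s) := fun s =>
    disjoint_of_subset_right (hI.subset s) disjoint_sdiff
  refine ⟨?_, fun s => ?_, fun k hk => ?_, fun s => ?_, fun s => ?_⟩
  · intro s t hst
    cases s using Fin.cases <;> cases t using Fin.cases
    · exact absurd rfl hst
    · exact hdisj _
    · exact (hdisj _).symm
    · exact hI.pairwise_disjoint (ne_of_apply_ne Fin.succ hst)
  · cases s using Fin.cases
    · exact hBS
    · exact (hI.subset _).trans sdiff_subset
  · by_cases hkB : k ∈ B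
    · exact ⟨0, hkB⟩
    · obtain ⟨s, hs⟩ := hI.exists_mem k (mem_sdiff.2 ⟨hk, hkB⟩)
      exact ⟨s.succ, hs⟩
  · cases s using Fin.cases
    · exact hBq
    · exact hI.card_eq _
  · cases s using Fin.cases
    · exact hB
    · exact hI.isGoodBlock _

theorem exists_isGoodPartition (hG : ∀ g : G, q • g = 0) {m : ℕ} (hm : 2 ≤ m)
    (hS : #S = m * q) : ∃ I : Fin m → Finset ι, IsGoodPartition a q S I := by
  induction m, hm using Nat.le_induction generalizing S with
  | base =>
    obtain ⟨B, hBS, hBq, hB, hSB⟩ := exists_split hG hS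
    have hSBq : #(S \ B) = q := by rw [card_sdiff_of_subset hBS, hS, hBq]; omega
    exact ⟨_, (isGoodPartition_const hSBq hSB).cons hBS hBq hB⟩
  | succ m hm ih =>
    obtain ⟨B, hBS, hBq, hB⟩ := exists_isGoodBlock (a := a) (by rw [hS]; nlinarith)
    obtain ⟨I, hI⟩ := ih (S := S \ B) <| by
      rw [card_sdiff_of_subset hBS, hS, hBq, add_one_mul, Nat.add_sub_cancel]
    exact ⟨_, hI.cons hBS hBq hB⟩

end

lemma isGoodBlock_intCast_iff {ι : Type*} {d : ℕ} {a : ι → ℤ} {B : Finset ι} :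
    IsGoodBlock (fun i => (a i : ZMod d)) B ↔
      ((d : ℤ) ∣ ∑ i ∈ B, a i) → ∀ i ∈ B, ∀ j ∈ B, (d : ℤ) ∣ a i - a j := by
  simp only [IsGoodBlock, ← Int.cast_sum, ZMod.intCast_zmod_eq_zero_iff_dvd,
    ZMod.intCast_eq_intCast_iff_dvd_sub]
  exact ⟨fun h hd i hi j hj => h hd j hj i hi, fun h hd i hi j hj => h hd j hj i hi⟩

theorem stmt_2_general (m q n : ℕ) (hm : 2 ≤ m) (hn : n = m * q)
    (d : ℕ) (hdq : d ∣ q) (a : Fin n → ℤ) :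
    ∃ I : Fin m → Finset (Fin n),
      (∀ s t, s ≠ t → Disjoint (I s) (I t)) ∧
      (∀ k : Fin n, ∃ s, k ∈ I s) ∧
      (∀ s, (I s).card = q) ∧
      (∀ s, ((d : ℤ) ∣ ∑ i ∈ I s, a i) →
        ∀ i ∈ I s, ∀ j ∈ I s, (d : ℤ) ∣ a i - a j) := by
  have hG : ∀ g : ZMod d, q • g = 0 := fun g => by
    rw [nsmul_eq_mul, (ZMod.natCast_eq_zero_iff q d).2 hdq, zero_mul]
  obtain ⟨I, hI⟩ := exists_isGoodPartition (a := fun i => (a i : ZMod d)) (S := univ) hG hm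
    (by rw [card_univ, Fintype.card_fin, hn])
  exact ⟨I, hI.pairwise_disjoint, fun k => hI.exists_mem k (mem_univ k), hI.card_eq,
    fun s => isGoodBlock_intCast_iff.1 (hI.isGoodBlock s)⟩

/-- Let `n = m·q` with `m ≥ 2`, `q ≥ 1`, let `d` be a positive divisor of `q`, and let
`a_1, ..., a_n` be integers (indexed by `Fin n`).  Then there is a partition
`I_1, ..., I_m` of `{1, ..., n}` into sets of size `q` such that for each `s`,
if `d ∣ ∑_{i ∈ I_s} a_i` then all the `a_i` with `i ∈ I_s` are pairwise congruent mod `d`. -/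
theorem stmt_2 (m q n : ℕ) (hm : 2 ≤ m) (hq : 0 < q) (hn : n = m * q)
    (d : ℕ) (hd : 0 < d) (hdq : d ∣ q) (a : Fin n → ℤ) :
    ∃ I : Fin m → Finset (Fin n),
      (∀ s t, s ≠ t → Disjoint (I s) (I t)) ∧
      (∀ k : Fin n, ∃ s, k ∈ I s) ∧
      (∀ s, (I s).card = q) ∧
      (∀ s, ((d : ℤ) ∣ ∑ i ∈ I s, a i) →
        ∀ i ∈ I s, ∀ j ∈ I s, (d : ℤ) ∣ a i - a j) :=
  stmt_2_general m q n hm hn d hdq a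
end

section
/- Let p be an odd prime, let α be a positive integer, let n = p^α, and let a_1, ..., a_n be integers. Suppose that either a_1 + ... + a_n ≢ 0 (mod p), or all the integers a_1, ..., a_n are pairwise congruent modulo p. Then there exists a permutation σ of {1, ..., n} such that ∑_{k=1}^n k·a_{σ(k)} ≡ 0 (mod n). -/
/-!
If `p ∤ ∑ aᵢ`, this sum is a unit modulo `n`, and for any offset `c`, replacing `σ` by
`k ↦ σ (k - j)` changes `∑ (k + c) a_{σ k}` by `j ∑ aᵢ` modulo `n`, so a suitable rotation works.

If all `aᵢ ≡ a₀ (mod p)`, write `aᵢ = a₀ + p bᵢ`. As `n` is odd, `n ∣ ∑ (k + 1)`, so it suffices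
to find `σ` with `p^(α-1) ∣ ∑ (k + 1) b_{σ k}`. This holds for any family `b` of size `p^α`, by
induction on `α`: if `p ∤ ∑ b` rotate as before; otherwise Erdős–Ginzburg–Ziv splits `b` into
`p^(α-1)` blocks of size `p` with sums `p d_r`, the induction hypothesis orders the `d_r`, and
the `r`-th block in that order is placed at the positions `≡ r (mod p^(α-1))`.
-/

open Finset

theorem cast_sum_mul_comp_sub_eq {n : ℕ} [NeZero n] (b : Fin n → ℤ) (c : ℤ) (j : Fin n) :
    ((∑ k : Fin n, ((k : ℤ) + c) * b (k - j) : ℤ) : ZMod n) =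
      ((∑ k : Fin n, ((k : ℤ) + c) * b k : ℤ) : ZMod n) +
        (j : ZMod n) * ((∑ k, b k : ℤ) : ZMod n) := by
  rw [← Equiv.sum_comp (Equiv.addRight j) (fun k : Fin n => ((k : ℤ) + c) * b (k - j))]
  push_cast
  rw [mul_sum, ← sum_add_distrib]
  refine sum_congr rfl fun i _ => ?_
  simp only [Equiv.coe_addRight, add_sub_cancel_right, Fin.val_add, ZMod.natCast_mod]
  push_cast
  ring

theorem exists_perm_dvd_sum_mul_of_isUnit {n : ℕ} [NeZero n] (b : Fin n → ℤ) (c : ℤ)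
    (hb : IsUnit ((∑ k, b k : ℤ) : ZMod n)) :
    ∃ σ : Equiv.Perm (Fin n), (n : ℤ) ∣ ∑ k : Fin n, ((k : ℤ) + c) * b (σ k) := by
  set j : ZMod n := -((∑ k : Fin n, ((k : ℤ) + c) * b k : ℤ) : ZMod n) * hb.unit⁻¹
  refine ⟨Equiv.subRight (Fin.ofNat n j.val), ?_⟩
  simp only [Equiv.subRight_apply]
  rw [← ZMod.intCast_zmod_eq_zero_iff_dvd, cast_sum_mul_comp_sub_eq]
  simp only [Fin.val_ofNat, Nat.mod_eq_of_lt (ZMod.val_lt j), ZMod.natCast_val, ZMod.cast_id',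
    id, j, mul_assoc, hb.val_inv_mul]
  ring

theorem exists_equiv_fin_prod_fin_dvd_sum {p : ℕ} (hp : 0 < p) (t : ℕ) {ι : Type*}
    [Fintype ι] [DecidableEq ι] (f : ι → ℤ) (hcard : Fintype.card ι = t * p)
    (hsum : (p : ℤ) ∣ ∑ i, f i) :
    ∃ e : Fin t × Fin p ≃ ι, ∀ r, (p : ℤ) ∣ ∑ i, f (e (r, i)) := by
  induction t generalizing ι with
  | zero =>
    rw [zero_mul, Fintype.card_eq_zero_iff] at hcard
    exact ⟨Equiv.equivOfIsEmpty _ _, fun r => r.elim0⟩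
  | succ t ih =>
    obtain ⟨u, hu, hud⟩ : ∃ u : Finset ι, #u = p ∧ (p : ℤ) ∣ ∑ i ∈ u, f i := by
      rcases t.eq_zero_or_pos with rfl | ht
      · exact ⟨univ, by simp [hcard], hsum⟩
      · obtain ⟨u, -, hu⟩ := Int.erdos_ginzburg_ziv (s := univ) f (n := p)
          (by rw [card_univ, hcard]; have := Nat.mul_le_mul_right p (by omega : 2 ≤ t + 1); omega)
        exact ⟨u, hu⟩
    obtain ⟨e', he'⟩ := ih (ι := {i // i ∉ u}) (fun i => f i)
      (by rw [Fintype.card_subtype_compl, Fintype.card_coe, hcard, hu]; ring_nf; omega)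
      (by
        rw [← Fintype.sum_subtype_add_sum_subtype (· ∈ u) f,
          ← Finset.sum_subtype u (fun _ => Iff.rfl) f] at hsum
        exact (dvd_add_right hud).1 hsum)
    let eu : Fin p ≃ {i // i ∈ u} := (Fintype.equivFinOfCardEq (by simp [hu])).symm
    refine ⟨(Equiv.prodCongr (finSuccEquiv t) (Equiv.refl _)).trans
      (optionProdEquiv.trans ((Equiv.sumCongr eu e').trans (Equiv.sumCompl (· ∈ u)))), ?_⟩
    intro r
    induction r using Fin.cases with
    | zero =>
      simpa [Finset.sum_subtype u (fun _ => Iff.rfl) f, Equiv.sum_comp eu (fun i => f i)] using hud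
    | succ r => simpa using he' r

theorem isUnit_intCast_zmod_prime_pow {p : ℕ} (hp : p.Prime) (α : ℕ) {z : ℤ}
    (hz : ¬ (p : ℤ) ∣ z) : IsUnit (z : ZMod (p ^ α)) := by
  rw [ZMod.coe_int_isUnit_iff_isCoprime, Nat.cast_pow]
  exact (((Nat.prime_iff_prime_int.mp hp).irreducible.coprime_iff_not_dvd).2 hz).pow_left

theorem sum_finProdFinEquiv_add_mul {q m : ℕ} (c : ℤ) (g : Fin q × Fin m → ℤ) :
    ∑ x, (((finProdFinEquiv x : ℕ) : ℤ) + c) * g x =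
      ∑ r : Fin m, ((r : ℤ) + c) * ∑ t, g (t, r) + m * ∑ x, (x.1 : ℤ) * g x := by
  simp only [mul_sum]
  rw [← Fintype.sum_prod_type_right (f := fun x : Fin q × Fin m => ((x.2 : ℤ) + c) * g x),
    ← sum_add_distrib]
  exact sum_congr rfl fun x _ => by simp only [finProdFinEquiv_apply_val]; push_cast; ring

theorem exists_perm_pow_dvd_sum_mul {p : ℕ} (hp : p.Prime) (c : ℤ) (α : ℕ)
    (b : Fin (p ^ (α + 1)) → ℤ) : ∃ σ : Equiv.Perm (Fin (p ^ (α + 1))),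
      (p : ℤ) ^ α ∣ ∑ k : Fin (p ^ (α + 1)), ((k : ℤ) + c) * b (σ k) := by
  induction α with
  | zero => exact ⟨1, by simp⟩
  | succ α ih =>
    have : NeZero (p ^ (α + 1 + 1)) := ⟨pow_ne_zero _ hp.ne_zero⟩
    obtain hS | hS := em' ((p : ℤ) ∣ ∑ k, b k)
    · obtain ⟨σ, hσ⟩ :=
        exists_perm_dvd_sum_mul_of_isUnit b c (isUnit_intCast_zmod_prime_pow hp _ hS)
      refine ⟨σ, dvd_trans ?_ hσ⟩
      push_cast
      exact pow_dvd_pow _ (by omega)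
    obtain ⟨e, he⟩ := exists_equiv_fin_prod_fin_dvd_sum hp.pos (p ^ (α + 1)) b
      (by rw [Fintype.card_fin, ← pow_succ]) hS
    choose d hd using he
    obtain ⟨τ, hτ⟩ := ih d
    let pos : Fin p × Fin (p ^ (α + 1)) ≃ Fin (p ^ (α + 1 + 1)) :=
      finProdFinEquiv.trans (finCongr (pow_succ' p (α + 1)).symm)
    let σ : Equiv.Perm (Fin (p ^ (α + 1 + 1))) :=
      pos.symm.trans ((Equiv.prodComm _ _).trans ((Equiv.prodCongr τ (Equiv.refl _)).trans e))
    have hsum : ∑ k : Fin (p ^ (α + 1 + 1)), ((k : ℤ) + c) * b (σ k) =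
        p * ∑ r : Fin (p ^ (α + 1)), ((r : ℤ) + c) * d (τ r) +
          (p : ℤ) ^ (α + 1) *
            ∑ x : Fin p × Fin (p ^ (α + 1)), (x.1 : ℤ) * b (e (τ x.2, x.1)) := by
      have hσ : ∀ x, σ (pos x) = e (τ x.2, x.1) := fun x => by simp [σ]; rfl
      have hpos : ∀ x, (pos x : ℕ) = finProdFinEquiv x := fun _ => rfl
      rw [← Equiv.sum_comp pos]
      simp only [hσ, hpos]
      rw [sum_finProdFinEquiv_add_mul]
      simp only [hd, Nat.cast_pow, mul_sum, mul_left_comm]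
    refine ⟨σ, ?_⟩
    rw [hsum, pow_succ']
    exact dvd_add (mul_dvd_mul_left _ hτ) (dvd_mul_right _ _)

theorem dvd_sum_fin_succ_of_odd {n : ℕ} (hn : Odd n) :
    (n : ℤ) ∣ ∑ k : Fin n, ((k : ℤ) + 1) := by
  obtain ⟨m, rfl⟩ := hn
  have hgauss := sum_range_id_mul_two (2 * m + 1 + 1)
  rw [sum_range_succ', add_zero, Nat.add_sub_cancel] at hgauss
  have : ∑ i ∈ range (2 * m + 1), (i + 1) = (2 * m + 1) * (m + 1) := by
    apply Nat.eq_of_mul_eq_mul_right two_pos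
    rw [hgauss]; ring
  refine ⟨m + 1, ?_⟩
  rw [Fin.sum_univ_eq_sum_range (fun i => (i : ℤ) + 1)]
  exact_mod_cast this

/-- Let `p` be an odd prime, `α ≥ 1`, `n = p^α`, and let `a_1, ..., a_n` be integers
(indexed by `Fin n`).  If either `a_1 + ... + a_n ≢ 0 (mod p)` or all the `a_k` are
pairwise congruent mod `p`, then there is a permutation `σ` of `{1, ..., n}` with
`∑_{k=1}^n k·a_{σ(k)} ≡ 0 (mod n)`. -/
theorem stmt_3 (p : ℕ) (hp : p.Prime) (hodd : Odd p) (α : ℕ) (hα : 0 < α)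
    (n : ℕ) (hn : n = p ^ α) (a : Fin n → ℤ)
    (h : ¬ ((p : ℤ) ∣ ∑ k : Fin n, a k) ∨
      ∀ i j : Fin n, (p : ℤ) ∣ a i - a j) :
    ∃ σ : Equiv.Perm (Fin n),
      (n : ℤ) ∣ ∑ k : Fin n, ((k : ℤ) + 1) * a (σ k) := by
  subst hn
  obtain ⟨β, rfl⟩ : ∃ β, α = β + 1 := ⟨α - 1, by omega⟩
  have : NeZero (p ^ (β + 1)) := ⟨pow_ne_zero _ hp.ne_zero⟩
  rcases h with h | h
  · exact exists_perm_dvd_sum_mul_of_isUnit a 1 (isUnit_intCast_zmod_prime_pow hp _ h)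
  choose b hb using fun i => h i 0
  obtain ⟨σ, hσ⟩ := exists_perm_pow_dvd_sum_mul hp 1 β b
  have hsplit : ∑ k : Fin (p ^ (β + 1)), ((k : ℤ) + 1) * a (σ k) =
      a 0 * ∑ k : Fin (p ^ (β + 1)), ((k : ℤ) + 1) +
        p * ∑ k : Fin (p ^ (β + 1)), ((k : ℤ) + 1) * b (σ k) := by
    rw [mul_sum, mul_sum, ← sum_add_distrib]
    exact sum_congr rfl fun k _ => by linear_combination ((k : ℤ) + 1) * hb (σ k)
  refine ⟨σ, ?_⟩
  rw [hsplit]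
  refine dvd_add (dvd_mul_of_dvd_right (dvd_sum_fin_succ_of_odd hodd.pow) _) ?_
  rw [Nat.cast_pow, pow_succ']
  exact mul_dvd_mul_left _ hσ
end

section
/- Let n = m·q where m and q are positive integers with m ≥ 2, let d be a positive divisor of q, and let a_1, ..., a_n be integers. Then there exists a subset I of {1, ..., n} with exactly q elements such that for each J equal to I or to the complement {1, ..., n} \ I, either all the integers a_j with j ∈ J are pairwise congruent modulo d, or d does not divide ∑_{j ∈ J} a_j. -/
/-!
Reduce modulo `d` and work with `b : ι → G` in an abelian group killed by `q`, where
`2q ≤ |ι|`; let `S` be the total sum. If `S ≠ 0` and `b` takes some value `r` at least `q`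
times, a `q`-subset of that fibre is constant with sum `q • r = 0`, so its complement has sum
`S ≠ 0`. Otherwise it suffices to find a `q`-subset whose sum avoids `{0, S}`. Pick indices
`X` representing `k + 1` distinct values of `b` and `q - 1` further indices `R`: the sets
`R ∪ {t}`, `t ∈ X`, have `k + 1` distinct sums, so one of them avoids any `k` given values.
This needs `b` to take more than `|{0, S}|` values: when `S = 0` that just means `b` is not
constant, and when every fibre has fewer than `q` elements, `2q ≤ |ι|` forces three values.
-/

open Finset

theorem two_lt_card_image_of_card_fiber_lt {α β : Type*} [Fintype α] [DecidableEq β]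
    (f : α → β) {q : ℕ} (hq : 0 < q) (hfib : ∀ r, #{a | f a = r} < q)
    (h2q : 2 * q ≤ Fintype.card α) :
    2 < #(univ.image f) := by
  have hle := card_le_mul_card_image univ (q - 1) fun r _ => Nat.le_pred_of_lt (hfib r)
  rw [card_univ] at hle
  by_contra! h
  have := hle.trans (Nat.mul_le_mul_left (q - 1) h)
  omega

variable {ι G : Type*} [Fintype ι] [DecidableEq ι] [AddCommGroup G]

def ConstOrSumNeZero (b : ι → G) (J : Finset ι) : Prop :=
  (∀ i ∈ J, ∀ j ∈ J, b i = b j) ∨ ∑ i ∈ J, b i ≠ 0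

theorem sum_compl_eq_sub (b : ι → G) (I : Finset ι) :
    ∑ i ∈ Iᶜ, b i = ∑ i, b i - ∑ i ∈ I, b i :=
  eq_sub_of_add_eq (sum_compl_add_sum I b)

variable [DecidableEq G]

theorem exists_card_eq_sum_notMem (b : ι → G) (C : Finset G) {q : ℕ} (hq : 0 < q)
    (hC : #C < #(univ.image b)) (hqC : q + #C ≤ Fintype.card ι) :
    ∃ I : Finset ι, #I = q ∧ ∑ i ∈ I, b i ∉ C := by
  obtain ⟨V, hVb, hVcard⟩ := exists_subset_card_eq (Nat.succ_le_of_lt hC)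
  obtain ⟨X, -, hXinj, hXV⟩ := exists_subset_injOn_image_eq_of_surjOn (Set.univ : Set ι) V
    fun v hv => by simpa using hVb hv
  have hXcard : #X = #C + 1 := by
    rw [← Nat.succ_eq_add_one, ← hVcard, ← hXV, card_image_of_injOn hXinj]
  obtain ⟨R, hRX, hRcard⟩ := exists_subset_card_eq (s := Xᶜ) (n := q - 1)
    (by rw [card_compl, hXcard]; omega)
  obtain ⟨w, hw, hwC⟩ := exists_mem_notMem_of_card_lt_card
    (s := C) (t := X.image fun t => ∑ i ∈ R, b i + b t)
    (by rw [card_image_of_injOn fun x hx y hy h => hXinj hx hy (add_left_cancel h), hXcard]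
        omega)
  obtain ⟨t, htX, rfl⟩ := mem_image.1 hw
  have htR : t ∉ R := fun h => mem_compl.1 (hRX h) htX
  refine ⟨insert t R, by rw [card_insert_of_notMem htR, hRcard]; omega, ?_⟩
  rwa [sum_insert htR, add_comm]

theorem exists_card_eq_constOrSumNeZero (b : ι → G) {q : ℕ} (hq : 0 < q)
    (hqG : ∀ x : G, q • x = 0) (h2q : 2 * q ≤ Fintype.card ι) :
    ∃ I : Finset ι, #I = q ∧ ConstOrSumNeZero b I ∧ ConstOrSumNeZero b Iᶜ := by
  set S := ∑ i, b i
  by_cases hconst : ∀ i j, b i = b j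
  · obtain ⟨I, -, hI⟩ := exists_subset_card_eq (s := (univ : Finset ι)) (n := q)
      (by rw [card_univ]; omega)
    exact ⟨I, hI, .inl fun i _ j _ => hconst i j, .inl fun i _ j _ => hconst i j⟩
  by_cases hfib : S ≠ 0 ∧ ∃ r, q ≤ #{i | b i = r}
  · obtain ⟨hS, r, hr⟩ := hfib
    obtain ⟨I, hIr, hI⟩ := exists_subset_card_eq hr
    have hIeq : ∀ i ∈ I, b i = r := fun i hi => (mem_filter.1 (hIr hi)).2
    have hIsum : ∑ i ∈ I, b i = 0 := by rw [sum_congr rfl hIeq, sum_const, hI, hqG]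
    refine ⟨I, hI, .inl fun i hi j hj => (hIeq i hi).trans (hIeq j hj).symm, .inr ?_⟩
    rwa [sum_compl_eq_sub, hIsum, sub_zero]
  suffices h : #{0, S} < #(univ.image b) ∧ q + #{0, S} ≤ Fintype.card ι by
    obtain ⟨I, hI, hIS⟩ := exists_card_eq_sum_notMem b {0, S} hq h.1 h.2
    simp only [mem_insert, mem_singleton, not_or] at hIS
    refine ⟨I, hI, .inr hIS.1, .inr ?_⟩
    rw [sum_compl_eq_sub]
    exact sub_ne_zero.2 (Ne.symm hIS.2)
  push Not at hconst
  obtain ⟨u, v, huv⟩ := hconst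
  by_cases hS : S = 0
  · have himage : 1 < #(univ.image b) := one_lt_card.2
      ⟨b u, mem_image_of_mem b (mem_univ u), b v, mem_image_of_mem b (mem_univ v), huv⟩
    simp only [hS, insert_eq_of_mem, mem_singleton, card_singleton]
    omega
  · have hfib : ∀ r, #{i | b i = r} < q := by simpa [hS] using hfib
    have hq2 : 1 < q := lt_of_le_of_lt (card_pos.2 ⟨u, by simp⟩ : 1 ≤ _) (hfib (b u))
    have := two_lt_card_image_of_card_fiber_lt b hq hfib h2q
    have := card_le_two (a := (0 : G)) (b := S)
    omega

theorem stmt_5_general (m q n : ℕ) (hm : 2 ≤ m) (hq : 0 < q) (hn : n = m * q)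
    (d : ℕ) (hdq : d ∣ q) (a : Fin n → ℤ) :
    ∃ I : Finset (Fin n), I.card = q ∧
      ∀ J : Finset (Fin n), (J = I ∨ J = Iᶜ) →
        ((∀ i ∈ J, ∀ j ∈ J, (d : ℤ) ∣ a i - a j) ∨
          ¬ ((d : ℤ) ∣ ∑ j ∈ J, a j)) := by
  have hqZ : ∀ x : ZMod d, q • x = 0 := fun x => by
    rw [nsmul_eq_mul, (ZMod.natCast_eq_zero_iff q d).2 hdq, zero_mul]
  have h2q : 2 * q ≤ Fintype.card (Fin n) := by
    rw [Fintype.card_fin, hn]; exact Nat.mul_le_mul_right q hm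
  obtain ⟨I, hI, hIconst, hIcconst⟩ :=
    exists_card_eq_constOrSumNeZero (fun i => (a i : ZMod d)) hq hqZ h2q
  have hcast : ∀ J, ConstOrSumNeZero (fun i => (a i : ZMod d)) J →
      (∀ i ∈ J, ∀ j ∈ J, (d : ℤ) ∣ a i - a j) ∨ ¬ ((d : ℤ) ∣ ∑ j ∈ J, a j) := by
    rintro J (hJ | hJ)
    · exact .inl fun i hi j hj => (ZMod.intCast_eq_intCast_iff_dvd_sub _ _ _).1 (hJ j hj i hi)
    · rw [← ZMod.intCast_zmod_eq_zero_iff_dvd, Int.cast_sum]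
      exact .inr hJ
  exact ⟨I, hI, by rintro J (rfl | rfl); exacts [hcast _ hIconst, hcast _ hIcconst]⟩

/-- Let `n = m·q` with `m ≥ 2`, `q ≥ 1`, let `d` be a positive divisor of `q`, and let
`a_1, ..., a_n` be integers (indexed by `Fin n`).  Then there is a `q`-element subset `I`
of `{1, ..., n}` such that for each `J ∈ {I, Iᶜ}`, either all the `a_j` with `j ∈ J` are
pairwise congruent mod `d`, or `d ∤ ∑_{j ∈ J} a_j`. -/
theorem stmt_5 (m q n : ℕ) (hm : 2 ≤ m) (hq : 0 < q) (hn : n = m * q)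
    (d : ℕ) (hd : 0 < d) (hdq : d ∣ q) (a : Fin n → ℤ) :
    ∃ I : Finset (Fin n), I.card = q ∧
      ∀ J : Finset (Fin n), (J = I ∨ J = Iᶜ) →
        ((∀ i ∈ J, ∀ j ∈ J, (d : ℤ) ∣ a i - a j) ∨
          ¬ ((d : ℤ) ∣ ∑ j ∈ J, a j)) :=
  stmt_5_general m q n hm hq hn d hdq a
end

section
/- Let d and n be positive integers, let a_1, ..., a_n be integers, let I_0 be a nonempty proper subset of {1, ..., n}, and let b be an integer. Suppose that for every i ∈ I_0 and every j ∈ {1, ..., n} \ I_0, the difference a_j − a_i is congruent to 0 or to b modulo d. Then the residues a_1 mod d, ..., a_n mod d take at most 2 distinct values; that is, the set {a_k mod d : k ∈ {1, ..., n}} has at most 2 elements. -/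
/-!
Pick `i₀ ∈ I₀` and `j₀ ∉ I₀`; modulo `d`, every `a j` with `j ∉ I₀` lies in `{a i₀, a i₀ + b}`
and every `a i` with `i ∈ I₀` lies in `{a j₀ - b, a j₀}`. If all of `I₀` sits at `a j₀`, the first
description already gives two residues; otherwise some `i₁ ∈ I₀` has `a j₀ = a i₁ + b`, and then
both descriptions, taken at `i₁` and `j₀`, involve only `a i₁` and `a j₀`.
-/

open Finset

theorem exists_forall_mem_union_eq_or_eq {ι G : Type*} [AddCommGroup G] [DecidableEq ι]
    (f : ι → G) {s t : Finset ι} (b : G) (hs : s.Nonempty) (ht : t.Nonempty)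
    (h : ∀ i ∈ s, ∀ j ∈ t, f j = f i ∨ f j = f i + b) :
    ∃ x y : G, ∀ k ∈ s ∪ t, f k = x ∨ f k = y := by
  obtain ⟨i₀, hi₀⟩ := hs
  obtain ⟨j₀, hj₀⟩ := ht
  by_cases hflat : ∀ i ∈ s, f i = f j₀
  · refine ⟨f j₀, f i₀ + b, fun k hk => ?_⟩
    rcases mem_union.mp hk with hk | hk
    · exact Or.inl (hflat k hk)
    · rw [← hflat i₀ hi₀]
      exact h i₀ hi₀ k hk
  · push Not at hflat
    obtain ⟨i₁, hi₁, hne⟩ := hflat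
    have hj₀_eq : f j₀ = f i₁ + b := (h i₁ hi₁ j₀ hj₀).resolve_left hne.symm
    refine ⟨f i₁, f j₀, fun k hk => ?_⟩
    rcases mem_union.mp hk with hk | hk
    · rcases h k hk j₀ hj₀ with hk' | hk'
      · exact Or.inr hk'.symm
      · exact Or.inl (add_right_cancel (hk'.symm.trans hj₀_eq))
    · rw [hj₀_eq]
      exact h i₁ hi₁ k hk

theorem card_image_union_le_two {ι G : Type*} [AddCommGroup G] [DecidableEq ι] [DecidableEq G]
    (f : ι → G) {s t : Finset ι} (b : G) (hs : s.Nonempty) (ht : t.Nonempty)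
    (h : ∀ i ∈ s, ∀ j ∈ t, f j = f i ∨ f j = f i + b) :
    ((s ∪ t).image f).card ≤ 2 := by
  obtain ⟨x, y, hxy⟩ := exists_forall_mem_union_eq_or_eq f b hs ht h
  calc ((s ∪ t).image f).card ≤ ({x, y} : Finset G).card := by
        refine card_le_card fun r hr => ?_
        obtain ⟨k, hk, rfl⟩ := mem_image.mp hr
        simpa only [mem_insert, mem_singleton] using hxy k hk
    _ ≤ 2 := card_le_two

theorem card_image_emod_eq_card_image_intCast {ι : Type*} (d : ℕ) (s : Finset ι) (a : ι → ℤ) :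
    (s.image fun k => a k % (d : ℤ)).card = (s.image fun k => (a k : ZMod d)).card := by
  have hcast : (s.image fun k => (a k : ZMod d)) =
      (s.image fun k => a k % (d : ℤ)).image fun r : ℤ => (r : ZMod d) := by
    simp only [image_image, Function.comp_def, ZMod.intCast_mod]
  rw [hcast]
  refine (card_image_of_injOn ?_).symm
  rintro _ hr _ hr' heq
  obtain ⟨k, -, rfl⟩ := mem_coe.mp hr |> mem_image.mp
  obtain ⟨k', -, rfl⟩ := mem_coe.mp hr' |> mem_image.mp
  simpa only [Int.emod_emod_of_dvd, dvd_refl] using (ZMod.intCast_eq_intCast_iff' _ _ d).mp heq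

theorem intCast_eq_or_eq_add_of_dvd_or_dvd {d : ℕ} {x y b : ℤ}
    (h : (d : ℤ) ∣ y - x ∨ (d : ℤ) ∣ y - x - b) :
    (y : ZMod d) = x ∨ (y : ZMod d) = x + b := by
  simp only [← ZMod.intCast_zmod_eq_zero_iff_dvd, Int.cast_sub] at h
  rcases h with h | h
  · exact Or.inl (by linear_combination h)
  · exact Or.inr (by linear_combination h)

theorem stmt_7_general (d n : ℕ) (a : ℕ → ℤ)
    (I₀ : Finset ℕ) (hsub : I₀ ⊆ Finset.Icc 1 n) (hne : I₀.Nonempty)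
    (hproper : I₀ ≠ Finset.Icc 1 n) (b : ℤ)
    (h : ∀ i ∈ I₀, ∀ j ∈ Finset.Icc 1 n \ I₀,
      (d : ℤ) ∣ (a j - a i) ∨ (d : ℤ) ∣ (a j - a i - b)) :
    ((Finset.Icc 1 n).image fun k => a k % (d : ℤ)).card ≤ 2 := by
  have hcompl : (Icc 1 n \ I₀).Nonempty :=
    sdiff_nonempty.mpr fun hsup => hproper (hsub.antisymm hsup)
  rw [card_image_emod_eq_card_image_intCast, ← union_sdiff_of_subset hsub]
  exact card_image_union_le_two _ (b : ZMod d) hne hcompl fun i hi j hj =>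
    intCast_eq_or_eq_add_of_dvd_or_dvd (h i hi j hj)

/-- Let `d, n ≥ 1`, let `a 1, ..., a n` be integers, let `I₀` be a nonempty proper
subset of `{1, ..., n}`, and let `b` be an integer.  If for every `i ∈ I₀` and every
`j ∈ {1, ..., n} \ I₀` the difference `a j - a i` is congruent to `0` or `b` mod `d`,
then the residues `a k mod d` for `k ∈ {1, ..., n}` take at most `2` distinct values. -/
theorem stmt_7 (d n : ℕ) (hd : 0 < d) (hn : 0 < n) (a : ℕ → ℤ)
    (I₀ : Finset ℕ) (hsub : I₀ ⊆ Finset.Icc 1 n) (hne : I₀.Nonempty)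
    (hproper : I₀ ≠ Finset.Icc 1 n) (b : ℤ)
    (h : ∀ i ∈ I₀, ∀ j ∈ Finset.Icc 1 n \ I₀,
      (d : ℤ) ∣ (a j - a i) ∨ (d : ℤ) ∣ (a j - a i - b)) :
    ((Finset.Icc 1 n).image fun k => a k % (d : ℤ)).card ≤ 2 :=
  stmt_7_general d n a I₀ hsub hne hproper b h
end
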